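/- arXiv:2306.15901 — 3 statements merged into one kernel-verified Lean document; each statement's English description precedes it below -/
import Mathlib

section
/- For complex numbers u, v with |u| ≥ |v| > 0, the function f(z) = z·ln|z| satisfies |f(u) - f(v)| ≤ (|ln|u|| + 1)·|u - v|. -/
noncomputable def f (z : ℂ) : ℂ := z * Real.log (‖z‖)

open Real

theorem Real.abs_log_sub_log_mul_le {x y : ℝ} (hy : 0 ≤ y) (hyx : y ≤ x) :
    |log x - log y| * y ≤ x - y := by
  rcases hy.eq_or_lt with rfl | hy
  · simpa using hyx
  have hx : 0 < x := hy.trans_le hyx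
  calc |log x - log y| * y = log (x / y) * y := by
        rw [abs_of_nonneg (sub_nonneg.2 (log_le_log hy hyx)), log_div hx.ne' hy.ne']
    _ ≤ (x / y - 1) * y := by gcongr; exact log_le_sub_one_of_pos (div_pos hx hy)
    _ = x - y := by field_simp

theorem norm_log_norm_smul_sub_le {E : Type*} [SeminormedAddCommGroup E] [NormedSpace ℝ E]
    {u v : E} (h : ‖v‖ ≤ ‖u‖) :
    ‖log ‖u‖ • u - log ‖v‖ • v‖ ≤ (|log ‖u‖| + 1) * ‖u - v‖ := by
  have hsplit : log ‖u‖ • u - log ‖v‖ • v = log ‖u‖ • (u - v) + (log ‖u‖ - log ‖v‖) • v := by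
    simp only [smul_sub, sub_smul]; abel
  have hv : ‖(log ‖u‖ - log ‖v‖) • v‖ ≤ ‖u - v‖ := by
    rw [norm_smul, Real.norm_eq_abs]
    exact (abs_log_sub_log_mul_le (norm_nonneg v) h).trans (norm_sub_norm_le u v)
  calc ‖log ‖u‖ • u - log ‖v‖ • v‖
      ≤ ‖log ‖u‖ • (u - v)‖ + ‖(log ‖u‖ - log ‖v‖) • v‖ := hsplit ▸ norm_add_le _ _
    _ ≤ |log ‖u‖| * ‖u - v‖ + ‖u - v‖ := by rw [norm_smul, Real.norm_eq_abs]; gcongr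
    _ = (|log ‖u‖| + 1) * ‖u - v‖ := by ring

theorem f_eq_log_norm_smul (z : ℂ) : f z = log ‖z‖ • z := by
  rw [f, Complex.real_smul, mul_comm]

theorem stmt_0_general (u v : ℂ) (h2 : ‖u‖ ≥ ‖v‖) :
    ‖f u - f v‖ ≤ (|Real.log (‖u‖)| + 1) * ‖u - v‖ := by
  simpa only [f_eq_log_norm_smul] using norm_log_norm_smul_sub_le h2

theorem stmt_0 (u v : ℂ) (h1 : ‖v‖ > 0) (h2 : ‖u‖ ≥ ‖v‖) :
    ‖f u - f v‖ ≤ (|Real.log (‖u‖)| + 1) * ‖u - v‖ :=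
  stmt_0_general u v h2
end

section
/- Let α ∈ (0,1) and δ_α = exp(α/(α-1)). If u, v ∈ ℂ satisfy |u|, |v| ≤ ε for some ε with 0 < ε ≤ δ_α, then |f(u) - f(v)| ≤ (2ε)^{1-α}(|ln ε| + 1)·|u - v|^α, where f(z) = z·ln|z| with f(0) = 0. -/
/-!
Assume `‖v‖ ≤ ‖u‖` and write `d = ‖u - v‖`. Splitting
`f u - f v = (u - v) log ‖u‖ + v (log ‖u‖ - log ‖v‖)` and using `log x ≤ x - 1` on the second
term gives `‖f u - f v‖ ≤ d (1 - log (d / 2))`, because `d / 2 ≤ ‖u‖ ≤ 1`. Writing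
`d = d ^ α (2 t) ^ (1 - α)` with `t = d / 2 ≤ ε`, it remains to see that
`t ↦ t ^ (1 - α) (1 - log t)` is increasing on `(0, δ_α]`: its derivative is
`t ^ (-α) ((1 - α)(1 - log t) - 1)`, and `δ_α` is exactly where this vanishes.
-/

open Real

lemma mul_abs_log_sub_log_le_sub {a b : ℝ} (hb : 0 ≤ b) (hba : b ≤ a) :
    b * |log a - log b| ≤ a - b := by
  rcases hb.eq_or_lt with rfl | hb
  · simpa using hba
  have ha : 0 < a := hb.trans_le hba
  rw [abs_of_nonneg (sub_nonneg.mpr (log_le_log hb hba))]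
  calc b * (log a - log b) = b * log (a / b) := by rw [log_div ha.ne' hb.ne']
    _ ≤ b * (a / b - 1) := by gcongr; exact log_le_sub_one_of_pos (by positivity)
    _ = a - b := by field_simp

lemma norm_f_sub_f_le_of_norm_le {u v : ℂ} (hvu : ‖v‖ ≤ ‖u‖) (hu : ‖u‖ ≤ 1) :
    ‖f u - f v‖ ≤ ‖u - v‖ * (1 - log (‖u - v‖ / 2)) := by
  rcases eq_or_ne u v with rfl | huv
  · simp
  set d := ‖u - v‖
  have hd : 0 < d := norm_pos_iff.mpr (sub_ne_zero.mpr huv)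
  have hdu : d / 2 ≤ ‖u‖ := by linarith [norm_sub_le u v]
  have hlog_u : |log ‖u‖| ≤ -log (d / 2) := by
    rw [abs_of_nonpos (log_nonpos (norm_nonneg u) hu)]
    linarith [log_le_log (by positivity) hdu]
  have hlog_diff : ‖v‖ * |log ‖u‖ - log ‖v‖| ≤ d :=
    (mul_abs_log_sub_log_le_sub (norm_nonneg v) hvu).trans (norm_sub_norm_le u v)
  calc ‖f u - f v‖ = ‖(u - v) * (log ‖u‖ : ℂ) + v * ((log ‖u‖ - log ‖v‖ : ℝ) : ℂ)‖ := by
        unfold f; push_cast; ring_nf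
    _ ≤ d * |log ‖u‖| + ‖v‖ * |log ‖u‖ - log ‖v‖| := by
        refine (norm_add_le _ _).trans_eq ?_
        rw [norm_mul, norm_mul, Complex.norm_real, Complex.norm_real, norm_eq_abs, norm_eq_abs]
    _ ≤ d * -log (d / 2) + d := by gcongr
    _ = d * (1 - log (d / 2)) := by ring

lemma norm_f_sub_f_le {u v : ℂ} (hu : ‖u‖ ≤ 1) (hv : ‖v‖ ≤ 1) :
    ‖f u - f v‖ ≤ ‖u - v‖ * (1 - log (‖u - v‖ / 2)) := by
  rcases le_total ‖v‖ ‖u‖ with h | h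
  · exact norm_f_sub_f_le_of_norm_le h hu
  · rw [norm_sub_rev (f u), norm_sub_rev u]
    exact norm_f_sub_f_le_of_norm_le h hv

lemma rpow_mul_one_sub_log_le_of_le {β t ε : ℝ} (hβ : 0 < β) (ht : 0 < t) (htε : t ≤ ε)
    (hε : 1 ≤ β * (1 - log ε)) : t ^ β * (1 - log t) ≤ ε ^ β * (1 - log ε) := by
  -- With `t = ε r` and `s = r ^ β ≤ 1`, this reduces to `s log s ≥ s - 1`.
  have hε0 : 0 < ε := ht.trans_le htε
  set r := t / ε
  have hr : 0 < r := div_pos ht hε0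
  set s := r ^ β
  have hs : s ≤ 1 := rpow_le_one hr.le ((div_le_one hε0).mpr htε) hβ.le
  have hs_log : s - 1 ≤ β * (s * log r) := by
    have := self_sub_one_le_mul_log (rpow_nonneg hr.le β)
    rwa [log_rpow hr, mul_left_comm] at this
  have hkey : s * ((1 - log ε) - log r) ≤ 1 - log ε := by
    have : 0 ≤ (1 - s) * (β * (1 - log ε) - 1) := mul_nonneg (by linarith) (by linarith)
    refine le_of_mul_le_mul_left ?_ hβ
    nlinarith
  have ht_eq : t = ε * r := by simp only [r]; field_simp
  rw [ht_eq, mul_rpow hε0.le hr.le, log_mul hε0.ne' hr.ne']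
  calc ε ^ β * s * (1 - (log ε + log r)) = ε ^ β * (s * ((1 - log ε) - log r)) := by ring
    _ ≤ ε ^ β * (1 - log ε) := by gcongr

lemma mul_one_sub_log_half_le {α ε d : ℝ} (hα : α ∈ Set.Ioo 0 1) (hd : 0 ≤ d)
    (hdε : d ≤ 2 * ε) (hε : 1 ≤ (1 - α) * (1 - log ε)) :
    d * (1 - log (d / 2)) ≤ (2 * ε) ^ (1 - α) * (1 - log ε) * d ^ α := by
  rcases hd.eq_or_lt with rfl | hd
  · simp [zero_rpow hα.1.ne']
  have hβ : 0 < 1 - α := sub_pos.mpr hα.2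
  have hmono := rpow_mul_one_sub_log_le_of_le hβ (half_pos hd) (by linarith) hε
  have hsplit : d = d ^ α * (2 ^ (1 - α) * (d / 2) ^ (1 - α)) := by
    rw [← mul_rpow zero_le_two (by positivity), mul_div_cancel₀ d two_ne_zero,
      ← rpow_add hd, add_sub_cancel, rpow_one]
  calc d * (1 - log (d / 2))
      = d ^ α * (2 ^ (1 - α) * ((d / 2) ^ (1 - α) * (1 - log (d / 2)))) := by
        nth_rewrite 1 [hsplit]
        ring
    _ ≤ d ^ α * (2 ^ (1 - α) * (ε ^ (1 - α) * (1 - log ε))) := by gcongr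
    _ = (2 * ε) ^ (1 - α) * (1 - log ε) * d ^ α := by
        rw [mul_rpow zero_le_two (by linarith)]; ring

theorem stmt_2 (α : ℝ) (hα : α ∈ Set.Ioo (0:ℝ) 1) (ε : ℝ)
    (hε : 0 < ε) (hεδ : ε ≤ Real.exp (α / (α - 1)))
    (u v : ℂ) (hu : ‖u‖ ≤ ε) (hv : ‖v‖ ≤ ε) :
    ‖f u - f v‖ ≤
      (2 * ε) ^ (1 - α) * (|Real.log ε| + 1) * ‖u - v‖ ^ α := by
  have hα_sub : α - 1 < 0 := by linarith [hα.2]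
  have hε1 : ε < 1 := hεδ.trans_lt (exp_lt_one_iff.mpr (div_neg_of_pos_of_neg hα.1 hα_sub))
  have hlog_ε : log ε ≤ α / (α - 1) := (log_le_iff_le_exp hε).mpr hεδ
  have hδ : 1 ≤ (1 - α) * (1 - log ε) := by
    have : (1 - α) * (α / (α - 1)) = -α := by field_simp [hα_sub.ne]; ring
    nlinarith
  have hd : ‖u - v‖ ≤ 2 * ε := by linarith [norm_sub_le u v]
  calc ‖f u - f v‖ ≤ ‖u - v‖ * (1 - log (‖u - v‖ / 2)) :=
        norm_f_sub_f_le (hu.trans hε1.le) (hv.trans hε1.le)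
    _ ≤ (2 * ε) ^ (1 - α) * (1 - log ε) * ‖u - v‖ ^ α :=
        mul_one_sub_log_half_le hα (norm_nonneg _) hd hδ
    _ = (2 * ε) ^ (1 - α) * (|log ε| + 1) * ‖u - v‖ ^ α := by
        rw [abs_of_neg (log_neg hε hε1)]; ring
end

section
/- Let Ω be a bounded measurable domain, α ∈ (0,1), ε ∈ (0, δ_α] with δ_α = exp(α/(α-1)), and u, v ∈ L^∞(Ω) with Λ = max{‖u‖_∞, ‖v‖_∞} > ε. Then ‖f(u) - f(v)‖²_{L²(Ω)} ≤ H_α(ε)²·‖u - v‖^{2α}_{L^{2α}(Ω)} + Υ(ε,Λ)²·‖u - v‖²_{L²(Ω)}, where f(w) = w·ln|w| pointwise (f(0)=0), H_α(ε) = (2ε)^{1-α}(|ln ε|+1), and Υ(ε,Λ) = max_{ε ≤ y ≤ Λ}(|ln y| + 1). -/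
/-!
Write `M = max ‖a‖ ‖b‖`. Splitting `f a - f b = (a - b) log ‖a‖ + b (log ‖a‖ - log ‖b‖)` and using
`x log (y / x) ≤ y - x` gives the local Lipschitz bound `‖f a - f b‖ ≤ (|log M| + 1) ‖a - b‖`.
Where `M > ε` the constant is at most `Υ(ε, Λ)`. Where `M ≤ ε < 1`, write
`‖a - b‖ = ‖a - b‖^α ‖a - b‖^(1-α) ≤ ‖a - b‖^α (2M)^(1-α)`; the factor `s^(1-α) (1 - log s)` is
increasing on `(0, δ_α]`, so `M` may be replaced by `ε`. Squaring, adding the two cases and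
integrating gives the estimate.
-/

open MeasureTheory

noncomputable def Υ (ε Λ : ℝ) : ℝ := sSup ((fun y => |Real.log y| + 1) '' Set.Icc ε Λ)

lemma norm_f_sub_f_le_of_norm_le_s11 {a b : ℂ} (hba : ‖b‖ ≤ ‖a‖) :
    ‖f a - f b‖ ≤ (|Real.log ‖a‖| + 1) * ‖a - b‖ := by
  rcases eq_or_ne b 0 with rfl | hb
  · simp only [f, norm_zero, Real.log_zero, Complex.ofReal_zero, mul_zero, sub_zero, norm_mul,
      Complex.norm_real, Real.norm_eq_abs]
    nlinarith [abs_nonneg (Real.log ‖a‖), norm_nonneg a]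
  have hb' : 0 < ‖b‖ := norm_pos_iff.mpr hb
  have ha' : 0 < ‖a‖ := hb'.trans_le hba
  have hsplit : f a - f b = (a - b) * (Real.log ‖a‖ : ℂ)
      + b * ((Real.log ‖a‖ - Real.log ‖b‖ : ℝ) : ℂ) := by
    simp only [f]; push_cast; ring
  have hlog : 0 ≤ Real.log ‖a‖ - Real.log ‖b‖ := sub_nonneg.mpr (Real.log_le_log hb' hba)
  have hratio : ‖b‖ * (Real.log ‖a‖ - Real.log ‖b‖) ≤ ‖a - b‖ := by
    have h := Real.log_le_sub_one_of_pos (div_pos ha' hb')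
    rw [Real.log_div ha'.ne' hb'.ne', le_sub_iff_add_le, le_div_iff₀ hb'] at h
    linarith [norm_sub_norm_le a b]
  calc ‖f a - f b‖
      ≤ ‖a - b‖ * |Real.log ‖a‖| + ‖b‖ * (Real.log ‖a‖ - Real.log ‖b‖) := by
        rw [hsplit]
        refine (norm_add_le _ _).trans_eq ?_
        rw [norm_mul, norm_mul, Complex.norm_real, Complex.norm_real, Real.norm_eq_abs,
          Real.norm_eq_abs, abs_of_nonneg hlog]
    _ ≤ (|Real.log ‖a‖| + 1) * ‖a - b‖ := by linarith

lemma norm_f_sub_f_le_s11 (a b : ℂ) :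
    ‖f a - f b‖ ≤ (|Real.log (max ‖a‖ ‖b‖)| + 1) * ‖a - b‖ := by
  rcases le_total ‖b‖ ‖a‖ with hba | hab
  · simpa [max_eq_left hba] using norm_f_sub_f_le_of_norm_le_s11 hba
  · simpa [max_eq_right hab, norm_sub_rev] using norm_f_sub_f_le_of_norm_le_s11 hab

lemma rpow_mul_one_sub_log_le {c m ε : ℝ} (hc : 0 < c) (hm : 0 ≤ m) (hmε : m ≤ ε)
    (hε : Real.log ε ≤ 1 - c⁻¹) :
    m ^ c * (1 - Real.log m) ≤ ε ^ c * (1 - Real.log ε) := by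
  have hLε : c⁻¹ ≤ 1 - Real.log ε := by linarith
  rcases hm.eq_or_lt with rfl | hm
  · rw [Real.zero_rpow hc.ne', zero_mul]
    exact mul_nonneg (Real.rpow_nonneg (hm.trans hmε) c) ((inv_pos.mpr hc).le.trans hLε)
  set t := ε / m
  have ht : 1 ≤ t := (one_le_div hm).mpr hmε
  have htc : 1 ≤ t ^ c := Real.one_le_rpow ht hc.le
  have hε_eq : ε = m * t := (mul_div_cancel₀ ε hm.ne').symm
  have hlog_t : c * Real.log t ≤ t ^ c - 1 := by
    simpa [Real.log_rpow (by linarith : 0 < t)] using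
      Real.log_le_sub_one_of_pos (Real.rpow_pos_of_pos (by linarith : 0 < t) c)
  have hkey : 1 - Real.log ε + Real.log t ≤ t ^ c * (1 - Real.log ε) := by
    have : Real.log t ≤ (t ^ c - 1) * (1 - Real.log ε) := by
      calc Real.log t ≤ (t ^ c - 1) * c⁻¹ := by
            rw [← div_eq_mul_inv, le_div_iff₀ hc]; linarith
        _ ≤ (t ^ c - 1) * (1 - Real.log ε) := by gcongr
    linarith
  have hlog_m : Real.log m = Real.log ε - Real.log t := by
    rw [hε_eq, Real.log_mul hm.ne' (by positivity)]; ring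
  calc m ^ c * (1 - Real.log m) = m ^ c * (1 - Real.log ε + Real.log t) := by rw [hlog_m]; ring
    _ ≤ m ^ c * (t ^ c * (1 - Real.log ε)) := by gcongr
    _ = ε ^ c * (1 - Real.log ε) := by
        rw [hε_eq, Real.mul_rpow hm.le (by positivity)]; ring

lemma norm_f_sub_f_le_holder {α ε : ℝ} (hα : α ∈ Set.Ioo (0:ℝ) 1) (hε : 0 < ε)
    (hεδ : ε ≤ Real.exp (α / (α - 1))) {a b : ℂ} (hab : max ‖a‖ ‖b‖ ≤ ε) :
    ‖f a - f b‖ ≤ (2 * ε) ^ (1 - α) * (|Real.log ε| + 1) * ‖a - b‖ ^ α := by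
  obtain ⟨hα0, hα1⟩ := hα
  set M := max ‖a‖ ‖b‖
  have hM : 0 ≤ M := (norm_nonneg a).trans (le_max_left _ _)
  have hδ : α / (α - 1) = 1 - (1 - α)⁻¹ := by
    have : α - 1 ≠ 0 := by linarith
    have : 1 - α ≠ 0 := by linarith
    field_simp; ring
  have hlogε : Real.log ε ≤ 1 - (1 - α)⁻¹ := hδ ▸ (Real.log_le_iff_le_exp hε).mpr hεδ
  have hε1 : ε ≤ 1 := hεδ.trans <|
    Real.exp_le_one_iff.mpr (div_nonpos_of_nonneg_of_nonpos hα0.le (by linarith))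
  have hlogM : Real.log M ≤ 0 := Real.log_nonpos hM (hab.trans hε1)
  have hD : ‖a - b‖ ≤ 2 * M := by
    linarith [norm_sub_le a b, le_max_left ‖a‖ ‖b‖, le_max_right ‖a‖ ‖b‖]
  calc ‖f a - f b‖ ≤ (|Real.log M| + 1) * ‖a - b‖ := norm_f_sub_f_le_s11 a b
    _ = ‖a - b‖ ^ α * (‖a - b‖ ^ (1 - α) * (1 - Real.log M)) := by
        rw [abs_of_nonpos hlogM]
        conv_lhs => rw [← Real.rpow_one ‖a - b‖, show (1:ℝ) = α + (1 - α) by ring,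
          Real.rpow_add' (norm_nonneg _) (by norm_num)]
        ring
    _ ≤ ‖a - b‖ ^ α * ((2 * M) ^ (1 - α) * (1 - Real.log M)) := by
        have : 0 ≤ 1 - Real.log M := by linarith
        gcongr
    _ = ‖a - b‖ ^ α * (2 ^ (1 - α) * (M ^ (1 - α) * (1 - Real.log M))) := by
        rw [Real.mul_rpow zero_le_two hM]; ring
    _ ≤ ‖a - b‖ ^ α * (2 ^ (1 - α) * (ε ^ (1 - α) * (1 - Real.log ε))) := by
        gcongr _ * (_ * ?_)
        exact rpow_mul_one_sub_log_le (by linarith) hM hab hlogε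
    _ = (2 * ε) ^ (1 - α) * (|Real.log ε| + 1) * ‖a - b‖ ^ α := by
        rw [abs_of_nonpos (Real.log_nonpos hε.le hε1), Real.mul_rpow zero_le_two hε.le]
        ring

lemma le_Υ {ε Λ y : ℝ} (hε : 0 < ε) (hy : y ∈ Set.Icc ε Λ) : |Real.log y| + 1 ≤ Υ ε Λ := by
  refine le_csSup (IsCompact.bddAbove_image isCompact_Icc ?_) (Set.mem_image_of_mem _ hy)
  refine ((Real.continuousOn_log.mono fun z hz => ?_).abs).add continuousOn_const
  exact ne_of_gt (hε.trans_le hz.1)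

lemma norm_f_sub_f_le_Υ {ε Λ : ℝ} (hε : 0 < ε) {a b : ℂ} (hab : max ‖a‖ ‖b‖ ∈ Set.Icc ε Λ) :
    ‖f a - f b‖ ≤ Υ ε Λ * ‖a - b‖ :=
  (norm_f_sub_f_le_s11 a b).trans (by gcongr; exact le_Υ hε hab)

lemma norm_f_sub_f_rpow_two_le {α ε Λ : ℝ} (hα : α ∈ Set.Ioo (0:ℝ) 1) (hε : 0 < ε)
    (hεδ : ε ≤ Real.exp (α / (α - 1))) {a b : ℂ} (ha : ‖a‖ ≤ Λ) (hb : ‖b‖ ≤ Λ) :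
    ‖f a - f b‖ ^ (2:ℝ) ≤ ((2 * ε) ^ (1 - α) * (|Real.log ε| + 1)) ^ 2 * ‖a - b‖ ^ (2 * α)
      + (Υ ε Λ) ^ 2 * ‖a - b‖ ^ (2:ℝ) := by
  simp only [mul_comm 2 α, Real.rpow_mul (norm_nonneg _), Real.rpow_two]
  rcases le_or_gt (max ‖a‖ ‖b‖) ε with hsmall | hlarge
  · have h := norm_f_sub_f_le_holder hα hε hεδ hsmall
    have : ‖f a - f b‖ ^ 2 ≤ ((2 * ε) ^ (1 - α) * (|Real.log ε| + 1) * ‖a - b‖ ^ α) ^ 2 := by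
      gcongr
    nlinarith [sq_nonneg (Υ ε Λ * ‖a - b‖)]
  · have h := norm_f_sub_f_le_Υ hε ⟨hlarge.le, max_le ha hb⟩
    have : ‖f a - f b‖ ^ 2 ≤ (Υ ε Λ * ‖a - b‖) ^ 2 := by gcongr
    nlinarith [sq_nonneg ((2 * ε) ^ (1 - α) * (|Real.log ε| + 1) * ‖a - b‖ ^ α)]

lemma integrable_norm_rpow_of_ae_le {X E : Type*} [MeasurableSpace X] [NormedAddCommGroup E]
    {μ : Measure X} [IsFiniteMeasure μ] {w : X → E} (hw : AEStronglyMeasurable w μ) {C : ℝ}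
    (hC : ∀ᵐ x ∂μ, ‖w x‖ ≤ C) {p : ℝ} (hp : 0 ≤ p) :
    Integrable (fun x => ‖w x‖ ^ p) μ := by
  refine .of_bound (hw.norm.aemeasurable.pow_const p).aestronglyMeasurable (C ^ p) ?_
  filter_upwards [hC] with x hx
  rw [Real.norm_of_nonneg (by positivity)]
  exact Real.rpow_le_rpow (norm_nonneg _) hx hp

lemma integral_le_mul_add_mul {X : Type*} [MeasurableSpace X] {μ : Measure X} {g h₁ h₂ : X → ℝ}
    (c₁ c₂ : ℝ) (hg : 0 ≤ᵐ[μ] g) (hh₁ : Integrable h₁ μ) (hh₂ : Integrable h₂ μ)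
    (hle : ∀ᵐ x ∂μ, g x ≤ c₁ * h₁ x + c₂ * h₂ x) :
    ∫ x, g x ∂μ ≤ c₁ * ∫ x, h₁ x ∂μ + c₂ * ∫ x, h₂ x ∂μ := by
  have hint := (hh₁.const_mul c₁).add (hh₂.const_mul c₂)
  calc ∫ x, g x ∂μ ≤ ∫ x, (c₁ * h₁ x + c₂ * h₂ x) ∂μ := integral_mono_of_nonneg hg hint hle
    _ = c₁ * ∫ x, h₁ x ∂μ + c₂ * ∫ x, h₂ x ∂μ := by
        rw [integral_add (hh₁.const_mul c₁) (hh₂.const_mul c₂), integral_const_mul,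
          integral_const_mul]

theorem stmt_11_general {d : ℕ} (Ω : Set (Fin d → ℝ))
    (hfin : volume Ω ≠ ⊤) (α : ℝ) (hα : α ∈ Set.Ioo (0:ℝ) 1)
    (ε : ℝ) (hε : 0 < ε) (hεδ : ε ≤ Real.exp (α / (α - 1)))
    (u v : (Fin d → ℝ) → ℂ) (hu : Measurable u) (hv : Measurable v)
    (Λ : ℝ)
    (hub : ∀ᵐ x ∂(volume.restrict Ω), ‖u x‖ ≤ Λ)
    (hvb : ∀ᵐ x ∂(volume.restrict Ω), ‖v x‖ ≤ Λ) :
    (∫ x in Ω, ‖f (u x) - f (v x)‖ ^ (2:ℝ)) ≤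
      ((2 * ε) ^ (1 - α) * (|Real.log ε| + 1)) ^ 2 *
          (∫ x in Ω, ‖u x - v x‖ ^ (2 * α))
        + (Υ ε Λ) ^ 2 * (∫ x in Ω, ‖u x - v x‖ ^ (2:ℝ)) := by
  have : IsFiniteMeasure (volume.restrict Ω) := isFiniteMeasure_restrict.mpr hfin
  have hdiff : ∀ᵐ x ∂(volume.restrict Ω), ‖u x - v x‖ ≤ 2 * Λ := by
    filter_upwards [hub, hvb] with x hux hvx
    linarith [norm_sub_le (u x) (v x)]
  have hmeas := (hu.sub hv).aestronglyMeasurable (μ := volume.restrict Ω)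
  refine integral_le_mul_add_mul _ _ (.of_forall fun x => by positivity)
    (integrable_norm_rpow_of_ae_le hmeas hdiff (by linarith [hα.1]))
    (integrable_norm_rpow_of_ae_le hmeas hdiff zero_le_two) ?_
  filter_upwards [hub, hvb] with x hux hvx
  exact norm_f_sub_f_rpow_two_le hα hε hεδ hux hvx

theorem stmt_11 {d : ℕ} (Ω : Set (Fin d → ℝ)) (hΩ : MeasurableSet Ω)
    (hfin : volume Ω ≠ ⊤) (α : ℝ) (hα : α ∈ Set.Ioo (0:ℝ) 1)
    (ε : ℝ) (hε : 0 < ε) (hεδ : ε ≤ Real.exp (α / (α - 1)))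
    (u v : (Fin d → ℝ) → ℂ) (hu : Measurable u) (hv : Measurable v)
    (Λ : ℝ) (hΛ : ε < Λ)
    (hub : ∀ᵐ x ∂(volume.restrict Ω), ‖u x‖ ≤ Λ)
    (hvb : ∀ᵐ x ∂(volume.restrict Ω), ‖v x‖ ≤ Λ) :
    (∫ x in Ω, ‖f (u x) - f (v x)‖ ^ (2:ℝ)) ≤
      ((2 * ε) ^ (1 - α) * (|Real.log ε| + 1)) ^ 2 *
          (∫ x in Ω, ‖u x - v x‖ ^ (2 * α))
        + (Υ ε Λ) ^ 2 * (∫ x in Ω, ‖u x - v x‖ ^ (2:ℝ)) :=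
  stmt_11_general Ω hfin α hα ε hε hεδ u v hu hv Λ hub hvb
end
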